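/- For every integer k ≥ 3, the graph G^5_k(p,q) satisfies χ(G^5_k(p,q)) = k + 1, and in every proper (k+1)-coloring of G^5_k(p,q), the vertices p and q receive distinct colors. -/
import Mathlib

open SimpleGraph

/-- The vertices of the gadget `G^5_k(p,q)`: the path `(p, x, y, z)`, a clique `P` of
size `k - 1`, a clique `Q` of size `k`, and the vertex `q`. -/
inductive G5Vert (k : ℕ) where
  | p : G5Vert k
  | x : G5Vert k
  | y : G5Vert k
  | z : G5Vert k
  | q : G5Vert k
  | P : Fin (k - 1) → G5Vert k
  | Q : Fin k → G5Vert k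
deriving DecidableEq

/-- The gadget `G^5_k(p,q)`: `(p, x, y, z)` is a path, `P` and `Q` are cliques,
each of `p, x, y, z` is complete to `P`, and each of `z, q` is complete to `Q`. -/
def G5 (k : ℕ) : SimpleGraph (G5Vert k) :=
  SimpleGraph.fromRel (fun a b =>
    (a = G5Vert.p ∧ b = G5Vert.x) ∨
    (a = G5Vert.x ∧ b = G5Vert.y) ∨
    (a = G5Vert.y ∧ b = G5Vert.z) ∨
    (∃ i j, a = G5Vert.P i ∧ b = G5Vert.P j) ∨
    (∃ i j, a = G5Vert.Q i ∧ b = G5Vert.Q j) ∨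
    (∃ i, (a = G5Vert.p ∨ a = G5Vert.x ∨ a = G5Vert.y ∨ a = G5Vert.z) ∧ b = G5Vert.P i) ∨
    (∃ i, (a = G5Vert.z ∨ a = G5Vert.q) ∧ b = G5Vert.Q i))

namespace G5Aux

variable {k : ℕ}

lemma adj_px : (G5 k).Adj .p .x := by
  rw [G5, fromRel_adj]; exact ⟨by simp, Or.inl (Or.inl ⟨rfl, rfl⟩)⟩

lemma adj_xy : (G5 k).Adj .x .y := by
  rw [G5, fromRel_adj]; exact ⟨by simp, Or.inl (Or.inr (Or.inl ⟨rfl, rfl⟩))⟩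

lemma adj_yz : (G5 k).Adj .y .z := by
  rw [G5, fromRel_adj]; exact ⟨by simp, Or.inl (Or.inr (Or.inr (Or.inl ⟨rfl, rfl⟩)))⟩

lemma adj_PP {i j : Fin (k-1)} (h : i ≠ j) : (G5 k).Adj (.P i) (.P j) := by
  rw [G5, fromRel_adj]
  exact ⟨by simpa using h, Or.inl (Or.inr (Or.inr (Or.inr (Or.inl ⟨i, j, rfl, rfl⟩))))⟩

lemma adj_QQ {i j : Fin k} (h : i ≠ j) : (G5 k).Adj (.Q i) (.Q j) := by
  rw [G5, fromRel_adj]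
  exact ⟨by simpa using h,
    Or.inl (Or.inr (Or.inr (Or.inr (Or.inr (Or.inl ⟨i, j, rfl, rfl⟩)))))⟩

lemma adj_pathP {a : G5Vert k}
    (ha : a = .p ∨ a = .x ∨ a = .y ∨ a = .z) (i : Fin (k-1)) :
    (G5 k).Adj a (.P i) := by
  rw [G5, fromRel_adj]
  refine ⟨?_, Or.inl (Or.inr (Or.inr (Or.inr (Or.inr (Or.inr (Or.inl ⟨i, ha, rfl⟩))))))⟩
  rcases ha with rfl | rfl | rfl | rfl <;> simp

lemma adj_zqQ {a : G5Vert k} (ha : a = .z ∨ a = .q) (i : Fin k) :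
    (G5 k).Adj a (.Q i) := by
  rw [G5, fromRel_adj]
  refine ⟨?_, Or.inl (Or.inr (Or.inr (Or.inr (Or.inr (Or.inr (Or.inr ⟨i, ha, rfl⟩))))))⟩
  rcases ha with rfl | rfl <;> simp

def col (k : ℕ) : G5Vert k → Fin (k+1)
  | .p => ⟨k-1, by omega⟩
  | .x => ⟨k, by omega⟩
  | .y => ⟨k-1, by omega⟩
  | .z => ⟨k, by omega⟩
  | .q => ⟨k, by omega⟩
  | .P i => ⟨i.val, by have := i.isLt; omega⟩
  | .Q i => ⟨i.val, by have := i.isLt; omega⟩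

lemma col_valid (hk : 3 ≤ k) {a b : G5Vert k} (hadj : (G5 k).Adj a b) :
    col k a ≠ col k b := by
  rw [G5, fromRel_adj] at hadj
  obtain ⟨hne, h⟩ := hadj
  rcases h with (⟨rfl, rfl⟩ | ⟨rfl, rfl⟩ | ⟨rfl, rfl⟩ | ⟨i, j, rfl, rfl⟩ | ⟨i, j, rfl, rfl⟩ |
      ⟨i, (rfl | rfl | rfl | rfl), rfl⟩ | ⟨i, (rfl | rfl), rfl⟩) |
    (⟨rfl, rfl⟩ | ⟨rfl, rfl⟩ | ⟨rfl, rfl⟩ | ⟨i, j, rfl, rfl⟩ | ⟨i, j, rfl, rfl⟩ |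
      ⟨i, (rfl | rfl | rfl | rfl), rfl⟩ | ⟨i, (rfl | rfl), rfl⟩) <;>
    simp_all [col, Fin.ext_iff] <;> omega

end G5Aux

theorem statement6 (k : ℕ) (hk : 3 ≤ k) :
    (G5 k).chromaticNumber = (k + 1 : ℕ) ∧
      ∀ C : (G5 k).Coloring (Fin (k + 1)), C G5Vert.p ≠ C G5Vert.q := by
  classical
  have hcol : (G5 k).Colorable (k+1) :=
    ⟨SimpleGraph.Coloring.mk (G5Aux.col k) (fun h => G5Aux.col_valid hk h)⟩
  have hpq : ∀ C : (G5 k).Coloring (Fin (k + 1)), C G5Vert.p ≠ C G5Vert.q := by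
    intro C
    -- the Q-clique colors
    set S : Finset (Fin (k+1)) :=
      Finset.univ.image (fun i : Fin k => C (G5Vert.Q i)) with hS
    have hinjQ : Function.Injective (fun i : Fin k => C (G5Vert.Q i)) := by
      intro i j hij
      by_contra hne
      exact C.valid (G5Aux.adj_QQ hne) hij
    have hScard : S.card = k := by
      rw [hS, Finset.card_image_of_injective _ hinjQ, Finset.card_univ, Fintype.card_fin]
    have hSc : Sᶜ.card = 1 := by
      rw [Finset.card_compl, hScard]
      simp
    have hzS : C G5Vert.z ∈ Sᶜ := by
      rw [Finset.mem_compl, hS]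
      simp only [Finset.mem_image, Finset.mem_univ, true_and, not_exists]
      intro i hi
      exact C.valid (G5Aux.adj_zqQ (Or.inl rfl) i) hi.symm
    have hqS : C G5Vert.q ∈ Sᶜ := by
      rw [Finset.mem_compl, hS]
      simp only [Finset.mem_image, Finset.mem_univ, true_and, not_exists]
      intro i hi
      exact C.valid (G5Aux.adj_zqQ (Or.inr rfl) i) hi.symm
    have hzq : C G5Vert.z = C G5Vert.q :=
      Finset.card_le_one.mp hSc.le _ hzS _ hqS
    -- the P-clique colors
    set T : Finset (Fin (k+1)) :=
      Finset.univ.image (fun i : Fin (k-1) => C (G5Vert.P i)) with hT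
    have hinjP : Function.Injective (fun i : Fin (k-1) => C (G5Vert.P i)) := by
      intro i j hij
      by_contra hne
      exact C.valid (G5Aux.adj_PP hne) hij
    have hTcard : T.card = k - 1 := by
      rw [hT, Finset.card_image_of_injective _ hinjP, Finset.card_univ, Fintype.card_fin]
    have hTc : Tᶜ.card = 2 := by
      rw [Finset.card_compl, hTcard]
      simp only [Fintype.card_fin]
      omega
    have hmem : ∀ a : G5Vert k, a = .p ∨ a = .x ∨ a = .y ∨ a = .z → C a ∈ Tᶜ := by
      intro a ha
      rw [Finset.mem_compl, hT]
      simp only [Finset.mem_image, Finset.mem_univ, true_and, not_exists]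
      intro i hi
      exact C.valid (G5Aux.adj_pathP ha i) hi.symm
    have hpx : C G5Vert.p ≠ C G5Vert.x := C.valid G5Aux.adj_px
    have hxy : C G5Vert.x ≠ C G5Vert.y := C.valid G5Aux.adj_xy
    have hyz : C G5Vert.y ≠ C G5Vert.z := C.valid G5Aux.adj_yz
    have hU : (Tᶜ.erase (C G5Vert.x)).card = 1 := by
      rw [Finset.card_erase_of_mem (hmem _ (Or.inr (Or.inl rfl))), hTc]
    have hpU : C G5Vert.p ∈ Tᶜ.erase (C G5Vert.x) :=
      Finset.mem_erase.mpr ⟨hpx, hmem _ (Or.inl rfl)⟩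
    have hyU : C G5Vert.y ∈ Tᶜ.erase (C G5Vert.x) :=
      Finset.mem_erase.mpr ⟨fun h => hxy h.symm, hmem _ (Or.inr (Or.inr (Or.inl rfl)))⟩
    have hpy : C G5Vert.p = C G5Vert.y :=
      Finset.card_le_one.mp hU.le _ hpU _ hyU
    rw [← hzq, hpy]
    exact hyz
  refine ⟨le_antisymm hcol.chromaticNumber_le ?_, hpq⟩
  -- lower bound via the (k+1)-clique {z} ∪ Q
  have hclq : (G5 k).IsClique
      (↑(insert G5Vert.z (Finset.univ.image (G5Vert.Q : Fin k → G5Vert k)))) := by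
    intro a ha b hb hab
    simp only [Finset.coe_insert, Set.mem_insert_iff, Finset.coe_image, Set.mem_image,
      Finset.mem_coe, Finset.mem_univ] at ha hb
    rcases ha with rfl | ⟨i, -, rfl⟩ <;> rcases hb with rfl | ⟨j, -, rfl⟩
    · exact absurd rfl hab
    · exact G5Aux.adj_zqQ (Or.inl rfl) j
    · exact (G5Aux.adj_zqQ (Or.inl rfl) i).symm
    · exact G5Aux.adj_QQ (by rintro rfl; exact hab rfl)
  have hcard : (insert G5Vert.z (Finset.univ.image (G5Vert.Q : Fin k → G5Vert k))).card
      = k + 1 := by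
    rw [Finset.card_insert_of_notMem (by simp), Finset.card_image_of_injective _
      (fun i j h => by injection h), Finset.card_univ, Fintype.card_fin]
  have := hclq.card_le_chromaticNumber
  rw [hcard] at this
  exact_mod_cast this
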